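/- If finite random variables U, X, Y satisfy U → X → Y and X → U → Y, then I(X, Y ∧ U) ≥ H(g(X)) for any function g of X such that g(X) is almost surely a function of U and X → g(X) → Y holds; in particular I(X,Y ∧ U) = I(X ∧ U). -/

import Mathlib

open scoped Classical
open Finset Real

noncomputable section

variable {Ω : Type*} [Fintype Ω]

/-- Pushforward probability of value `x` under random variable `X` w.r.t. pmf `p`. -/
def dist' {α : Type*} (p : Ω → ℝ) (X : Ω → α) (x : α) : ℝ :=
  ∑ ω, if X ω = x then p ω else 0

/-- Shannon entropy, base 2. -/
def ent {α : Type*} [Fintype α] (p : Ω → ℝ) (X : Ω → α) : ℝ :=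
  -∑ x, dist' p X x * Real.logb 2 (dist' p X x)

/-- Conditional entropy `H(X | Y)`. -/
def condEnt {α β : Type*} [Fintype α] [Fintype β] (p : Ω → ℝ) (X : Ω → α) (Y : Ω → β) : ℝ :=
  ent p (fun ω => (X ω, Y ω)) - ent p Y

/-- Mutual information `I(X ∧ Y)`. -/
def mi {α β : Type*} [Fintype α] [Fintype β] (p : Ω → ℝ) (X : Ω → α) (Y : Ω → β) : ℝ :=
  ent p X + ent p Y - ent p (fun ω => (X ω, Y ω))

/-- Conditional mutual information `I(X ∧ Y | Z)`. -/
def cmi {α β γ : Type*} [Fintype α] [Fintype β] [Fintype γ]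
    (p : Ω → ℝ) (X : Ω → α) (Y : Ω → β) (Z : Ω → γ) : ℝ :=
  ent p (fun ω => (X ω, Z ω)) + ent p (fun ω => (Y ω, Z ω))
    - ent p (fun ω => ((X ω, Y ω), Z ω)) - ent p Z

/-- `p` is a probability mass function on `Ω`. -/
def IsPMF (p : Ω → ℝ) : Prop := (∀ ω, 0 ≤ p ω) ∧ ∑ ω, p ω = 1


/-!
The equality is the chain rule `I(X,Y ∧ U) = I(X ∧ U) + I(U ∧ Y | X)` together with the Markov
chain `U → X → Y`. For the bound, `g(X)` is a function of `X` and almost surely of `U`, so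
`I(X ∧ U) = I(X ∧ U | g(X)) + H(g(X))`, and conditional mutual information is nonnegative: for each
value of the conditioning variable this is Gibbs' inequality against the product of the marginals.
-/

lemma mul_log_le_mul_log_add_sub {x y : ℝ} (hx : 0 ≤ x) (hy : 0 ≤ y) (hxy : 0 < x → 0 < y) :
    x * log y ≤ x * log x + (y - x) := by
  rcases hx.eq_or_lt with rfl | hx
  · simpa using hy
  have hlog := log_le_sub_one_of_pos (div_pos (hxy hx) hx)
  rw [log_div (hxy hx).ne' hx.ne'] at hlog
  have := mul_le_mul_of_nonneg_left hlog hx.le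
  rw [mul_sub, mul_sub, mul_div_cancel₀ _ hx.ne'] at this
  linarith

section negMulLog

variable {α β : Type*} [Fintype α] [Fintype β]

/-- The mutual information of a nonnegative matrix `q`, viewed as an unnormalised joint
distribution, is nonnegative. -/
theorem sum_negMulLog_add_negMulLog_sum_le (q : α → β → ℝ) (hq : ∀ a b, 0 ≤ q a b) :
    ∑ a, ∑ b, negMulLog (q a b) + negMulLog (∑ a, ∑ b, q a b)
      ≤ ∑ a, negMulLog (∑ b, q a b) + ∑ b, negMulLog (∑ a, q a b) := by
  set r : α → ℝ := fun a => ∑ b, q a b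
  set c : β → ℝ := fun b => ∑ a, q a b
  set T := ∑ a, r a
  have hr a : 0 ≤ r a := sum_nonneg fun b _ => hq a b
  have hc b : 0 ≤ c b := sum_nonneg fun a _ => hq a b
  have hT : 0 ≤ T := sum_nonneg fun a _ => hr a
  have hcT : ∑ b, c b = T := sum_comm
  have hq_le_r a b : q a b ≤ r a := single_le_sum (fun b _ => hq a b) (mem_univ b)
  have hq_le_c a b : q a b ≤ c b := single_le_sum (fun a _ => hq a b) (mem_univ a)
  have hr_le_T a : r a ≤ T := single_le_sum (fun a _ => hr a) (mem_univ a)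
  -- Gibbs' inequality against the product of the marginals, `r a * c b / T`.
  have gibbs a b : q a b * (log (r a) + log (c b) - log T)
      ≤ q a b * log (q a b) + (r a * c b / T - q a b) := by
    rcases (hq a b).eq_or_lt with h0 | hpos
    · rw [← h0]
      simpa using div_nonneg (mul_nonneg (hr a) (hc b)) hT
    have hra := hpos.trans_le (hq_le_r a b)
    have hcb := hpos.trans_le (hq_le_c a b)
    have hTp := hra.trans_le (hr_le_T a)
    have := mul_log_le_mul_log_add_sub (y := r a * c b / T) (hq a b) (by positivity)
      fun _ => by positivity
    rwa [log_div (by positivity) hTp.ne', log_mul hra.ne' hcb.ne'] at this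
  have hprod : ∑ a, ∑ b, r a * c b / T = T := by
    rcases hT.eq_or_lt with h0 | hTp
    · simp [← h0]
    simp_rw [← sum_div, ← mul_sum, hcT, ← sum_mul]
    field_simp
    rfl
  have hlhs : ∑ a, ∑ b, q a b * (log (r a) + log (c b) - log T)
      = ∑ a, r a * log (r a) + ∑ b, c b * log (c b) - T * log T := by
    simp only [mul_add, mul_sub, sum_add_distrib, sum_sub_distrib, ← sum_mul]
    rw [sum_comm (f := fun a b => q a b * log (c b))]
    simp only [← sum_mul]
    rfl
  have hsum := sum_le_sum fun a (_ : a ∈ univ) => sum_le_sum fun b (_ : b ∈ univ) => gibbs a b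
  simp only [sum_add_distrib, sum_sub_distrib, hprod, hlhs] at hsum
  simp only [negMulLog, neg_mul, sum_neg_distrib]
  linarith

end negMulLog

lemma dist'_nonneg {α : Type*} {p : Ω → ℝ}
    (hp : ∀ ω, 0 ≤ p ω) (X : Ω → α) (x : α) :
    0 ≤ dist' p X x :=
  sum_nonneg fun ω _ => by split_ifs <;> simp [hp ω]

section dist'

variable {α β γ : Type*} (p : Ω → ℝ)

lemma sum_dist'_pair_fst [Fintype α] (A : Ω → α) (B : Ω → β) (b : β) :
    ∑ a, dist' p (fun ω => (A ω, B ω)) (a, b) = dist' p B b := by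
  unfold dist'
  rw [sum_comm]
  refine sum_congr rfl fun ω _ => ?_
  by_cases hB : B ω = b <;> simp [hB, Prod.ext_iff]

lemma sum_dist'_triple_fst [Fintype α] (A : Ω → α) (B : Ω → β) (C : Ω → γ)
    (b : β) (c : γ) :
    ∑ a, dist' p (fun ω => ((A ω, B ω), C ω)) ((a, b), c)
      = dist' p (fun ω => (B ω, C ω)) (b, c) := by
  unfold dist'
  rw [sum_comm]
  refine sum_congr rfl fun ω _ => ?_
  by_cases hB : B ω = b <;> by_cases hC : C ω = c <;> simp [hB, hC, Prod.ext_iff]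

lemma sum_dist'_triple_snd [Fintype β] (A : Ω → α) (B : Ω → β) (C : Ω → γ)
    (a : α) (c : γ) :
    ∑ b, dist' p (fun ω => ((A ω, B ω), C ω)) ((a, b), c)
      = dist' p (fun ω => (A ω, C ω)) (a, c) := by
  unfold dist'
  rw [sum_comm]
  refine sum_congr rfl fun ω _ => ?_
  by_cases hA : A ω = a <;> by_cases hC : C ω = c <;> simp [hA, hC, Prod.ext_iff]

end dist'

lemma ent_eq_sum_negMulLog_div {α : Type*} [Fintype α] (p : Ω → ℝ) (X : Ω → α) :
    ent p X = (∑ x, negMulLog (dist' p X x)) / log 2 := by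
  simp only [ent, logb, negMulLog, neg_mul, sum_neg_distrib, sum_div, neg_div, mul_div_assoc]

theorem cmi_nonneg {α β γ : Type*} [Fintype α] [Fintype β] [Fintype γ]
    {p : Ω → ℝ} (hp : ∀ ω, 0 ≤ p ω) (A : Ω → α) (B : Ω → β) (C : Ω → γ) :
    0 ≤ cmi p A B C := by
  have hc c := by
    have h := sum_negMulLog_add_negMulLog_sum_le
      (fun a b => dist' p (fun ω => ((A ω, B ω), C ω)) ((a, b), c))
      fun a b => dist'_nonneg hp _ _
    simp only [sum_dist'_triple_fst, sum_dist'_triple_snd, sum_dist'_pair_fst] at h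
    rwa [sum_comm] at h
  have hsum := sum_le_sum fun c (_ : c ∈ univ) => hc c
  simp only [sum_add_distrib] at hsum
  rw [cmi, ent_eq_sum_negMulLog_div, ent_eq_sum_negMulLog_div, ent_eq_sum_negMulLog_div,
    ent_eq_sum_negMulLog_div, ← add_div, ← sub_div, ← sub_div]
  refine div_nonneg ?_ (log_pos one_lt_two).le
  simp only [Fintype.sum_prod_type_right]
  linarith

lemma IsPMF.of_sum_ite_eq_one {p : Ω → ℝ} (hp : IsPMF p) {P : Ω → Prop}
    (h : (∑ ω, if P ω then p ω else 0) = 1) {ω : Ω} (hω : p ω ≠ 0) : P ω := by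
  by_contra hP
  have hzero : ∑ ω, (p ω - if P ω then p ω else 0) = 0 := by
    rw [sum_sub_distrib, hp.2, h, sub_self]
  rw [sum_eq_zero_iff_of_nonneg fun ω _ => by split_ifs <;> simp [hp.1 ω]] at hzero
  simpa [hP, hω] using hzero ω (mem_univ ω)

lemma ent_congr_of_ne_zero {α : Type*} [Fintype α] {p : Ω → ℝ} {V W : Ω → α}
    (h : ∀ ω, p ω ≠ 0 → V ω = W ω) :
    ent p V = ent p W := by
  have hdist x : dist' p V x = dist' p W x := sum_congr rfl fun ω _ => by
    by_cases hω : p ω = 0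
    · simp [hω]
    · rw [h ω hω]
  simp only [ent, hdist]

section ent

variable {α β γ : Type*} [Fintype α] [Fintype β] [Fintype γ] (p : Ω → ℝ)

lemma ent_comp_of_injective (V : Ω → α) {e : α → β} (he : Function.Injective e) :
    ent p (fun ω => e (V ω)) = ent p V := by
  have hdist a : dist' p (fun ω => e (V ω)) (e a) = dist' p V a :=
    sum_congr rfl fun ω _ => by simp only [he.eq_iff]
  have hout b (hb : b ∉ univ.image e) : dist' p (fun ω => e (V ω)) b = 0 :=
    sum_eq_zero fun ω _ => if_neg fun h => hb (mem_image.2 ⟨V ω, mem_univ _, h⟩)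
  unfold ent
  rw [← sum_subset (subset_univ (univ.image e)) fun b _ hb => by simp [hout b hb],
    sum_image fun a _ b _ h => he h]
  simp only [hdist]

lemma ent_prod_comm (V : Ω → α) (W : Ω → β) :
    ent p (fun ω => (V ω, W ω)) = ent p (fun ω => (W ω, V ω)) :=
  ent_comp_of_injective p (fun ω => (W ω, V ω)) Prod.swap_injective

lemma mi_pair_eq_mi_add_cmi (U : Ω → α) (X : Ω → β) (Y : Ω → γ) :
    mi p (fun ω => (X ω, Y ω)) U = mi p X U + cmi p U Y X := by
  have hassoc : ent p (fun ω => ((X ω, Y ω), U ω)) = ent p (fun ω => ((U ω, Y ω), X ω)) :=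
    ent_comp_of_injective p (fun ω => ((U ω, Y ω), X ω)) (e := fun w => ((w.2, w.1.2), w.1.1))
      fun _ _ h => by simp_all [Prod.ext_iff]
  simp only [mi, cmi, hassoc, ent_prod_comm p X Y, ent_prod_comm p X U]
  ring

lemma mi_eq_cmi_add_ent_of_ne_zero (V : Ω → α) (W : Ω → β) (g : α → γ) (f : β → γ)
    (h : ∀ ω, p ω ≠ 0 → f (W ω) = g (V ω)) :
    mi p V W = cmi p V W (fun ω => g (V ω)) + ent p (fun ω => g (V ω)) := by
  have hV : ent p (fun ω => (V ω, g (V ω))) = ent p V :=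
    ent_comp_of_injective p V (e := fun v => (v, g v)) fun _ _ h => congrArg Prod.fst h
  have hW : ent p (fun ω => (W ω, g (V ω))) = ent p W := by
    rw [ent_congr_of_ne_zero (W := fun ω => (W ω, f (W ω))) fun ω hω => by rw [h ω hω]]
    exact ent_comp_of_injective p W (e := fun w => (w, f w)) fun _ _ h => congrArg Prod.fst h
  have hVW : ent p (fun ω => ((V ω, W ω), g (V ω))) = ent p (fun ω => (V ω, W ω)) :=
    ent_comp_of_injective p (fun ω => (V ω, W ω)) (e := fun v => (v, g v.1))
      fun _ _ h => congrArg Prod.fst h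
  simp only [mi, cmi, hV, hW, hVW]
  ring

end ent

theorem stmt3_general {Ω 𝒰 𝒳 𝒴 γ : Type*} [Fintype Ω] [Fintype 𝒰] [Fintype 𝒳] [Fintype 𝒴] [Fintype γ]
    (p : Ω → ℝ) (hp : IsPMF p) (U : Ω → 𝒰) (X : Ω → 𝒳) (Y : Ω → 𝒴)
    (h1 : cmi p U Y X = 0)
    (g : 𝒳 → γ) (f : 𝒰 → γ)
    (hfg : (∑ ω, if f (U ω) = g (X ω) then p ω else 0) = 1) :
    mi p (fun ω => (X ω, Y ω)) U ≥ ent p (fun ω => g (X ω)) ∧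
    mi p (fun ω => (X ω, Y ω)) U = mi p X U := by
  have hmi : mi p (fun ω => (X ω, Y ω)) U = mi p X U := by
    rw [mi_pair_eq_mi_add_cmi, h1, add_zero]
  refine ⟨?_, hmi⟩
  rw [hmi, mi_eq_cmi_add_ent_of_ne_zero p X U g f fun ω => hp.of_sum_ite_eq_one hfg]
  linarith [cmi_nonneg hp.1 X U fun ω => g (X ω)]

/-- Under the double Markov conditions, `I(X,Y ∧ U) ≥ H(g(X))` for any `g(X)` that is a.s.
a function of `U` and satisfies `X -∘- g(X) -∘- Y`; in particular `I(X,Y ∧ U) = I(X ∧ U)`. -/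
theorem stmt3 {Ω 𝒰 𝒳 𝒴 γ : Type*} [Fintype Ω] [Fintype 𝒰] [Fintype 𝒳] [Fintype 𝒴] [Fintype γ]
    (p : Ω → ℝ) (hp : IsPMF p) (U : Ω → 𝒰) (X : Ω → 𝒳) (Y : Ω → 𝒴)
    (h1 : cmi p U Y X = 0) (h2 : cmi p X Y U = 0)
    (g : 𝒳 → γ) (f : 𝒰 → γ)
    (hfg : (∑ ω, if f (U ω) = g (X ω) then p ω else 0) = 1)
    (hmc : cmi p X Y (fun ω => g (X ω)) = 0) :
    mi p (fun ω => (X ω, Y ω)) U ≥ ent p (fun ω => g (X ω)) ∧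
    mi p (fun ω => (X ω, Y ω)) U = mi p X U :=
  stmt3_general p hp U X Y h1 g f hfg
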